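/- arXiv:2505.19520 — 3 statements merged into one kernel-verified Lean document; each statement's English description precedes it below -/
import Mathlib

section
/- Every maximal peak-pit Condorcet domain on a finite set A of alternatives is directly connected. -/
/-!
Common definitions for formalizing Condorcet domains.

A linear order on a finite set `A : Finset α` of alternatives is encoded as a
duplicate-free list enumerating the elements of `A` from most preferred (head)
to least preferred (last).
-/

variable {α : Type*}

/-- `l` is a linear order on the finite set `A` of alternatives. -/
def IsLinOrd [DecidableEq α] (A : Finset α) (l : List α) : Prop :=
  l.Nodup ∧ l.toFinset = A

/-- The restriction of a linear order `l` to the subset `S` of alternatives. -/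
def restrictOrd [DecidableEq α] (l : List α) (S : Finset α) : List α :=
  l.filter (fun x => decide (x ∈ S))

/-- The restriction of a domain `D` to the subset `S` of alternatives. -/
def restrictDom [DecidableEq α] (D : Set (List α)) (S : Finset α) : Set (List α) :=
  (fun l => restrictOrd l S) '' D

/-- The never-condition `x N (k+1)`: no linear order in `E` ranks `x` in
position `k+1` (positions are counted from `1`, so `k : Fin 3` is the
zero-based index).  `k = 0` is a never-top condition, `k = 2` a never-bottom
condition. -/
def NeverCond (E : Set (List α)) (x : α) (k : Fin 3) : Prop :=
  ∀ l ∈ E, l[(k : ℕ)]? ≠ some x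

/-- The set of never-conditions (encoded as pairs `(x, k)`) satisfied by a
domain `E` on the triple `T`. -/
def NeverConds (T : Finset α) (E : Set (List α)) : Set (α × Fin 3) :=
  {p | p.1 ∈ T ∧ NeverCond E p.1 p.2}

/-- The set of peak-pit conditions (never-top or never-bottom conditions)
satisfied by a domain `E` on the triple `T`. -/
def PeakPitConds (T : Finset α) (E : Set (List α)) : Set (α × Fin 3) :=
  {p | p.1 ∈ T ∧ (p.2 = 0 ∨ p.2 = 2) ∧ NeverCond E p.1 p.2}

/-- `D` is a Condorcet domain on `A`: a set of linear orders on `A` whose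
restriction to every triple of distinct alternatives satisfies some
never-condition. -/
def IsCondorcetDomain [DecidableEq α] (A : Finset α) (D : Set (List α)) : Prop :=
  (∀ l ∈ D, IsLinOrd A l) ∧
    ∀ a b c : α, a ∈ A → b ∈ A → c ∈ A → a ≠ b → a ≠ c → b ≠ c →
      ∃ x ∈ ({a, b, c} : Finset α), ∃ k : Fin 3,
        NeverCond (restrictDom D {a, b, c}) x k

/-- `D` is a peak-pit Condorcet domain on `A`: a set of linear orders on `A`
whose restriction to every triple of distinct alternatives satisfies a
never-top or a never-bottom condition. -/
def IsPeakPitDomain [DecidableEq α] (A : Finset α) (D : Set (List α)) : Prop :=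
  (∀ l ∈ D, IsLinOrd A l) ∧
    ∀ a b c : α, a ∈ A → b ∈ A → c ∈ A → a ≠ b → a ≠ c → b ≠ c →
      ∃ x ∈ ({a, b, c} : Finset α),
        NeverCond (restrictDom D {a, b, c}) x 0 ∨
          NeverCond (restrictDom D {a, b, c}) x 2

/-- Two linear orders are alike if they differ by a swap of two adjacent
alternatives. -/
def Alike (R T : List α) : Prop :=
  ∃ (l₁ l₂ : List α) (x y : α), x ≠ y ∧
    R = l₁ ++ x :: y :: l₂ ∧ T = l₁ ++ y :: x :: l₂

/-- `P` is a path of alike linear orders on `L(A)`. -/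
def IsPathOn [DecidableEq α] (A : Finset α) (P : List (List α)) : Prop :=
  P ≠ [] ∧ (∀ l ∈ P, IsLinOrd A l) ∧ P.Chain' Alike

/-- `P` is a path of alike linear orders on `L(A)` connecting `R` and `T`. -/
def IsPath [DecidableEq α] (A : Finset α) (P : List (List α)) (R T : List α) : Prop :=
  IsPathOn A P ∧ P.head? = some R ∧ P.getLast? = some T

/-- `P` is a geodesic on `L(A)` connecting `R` and `T`: a path of alike linear
orders of minimal length among all such paths. -/
def IsGeodesic [DecidableEq α] (A : Finset α) (P : List (List α)) (R T : List α) : Prop :=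
  IsPath A P R T ∧ ∀ Q : List (List α), IsPath A Q R T → P.length ≤ Q.length

/-- The switching pair of alternatives between two alike linear orders (as an
unordered pair); `none` if the two lists do not differ. -/
def switchPair? [DecidableEq α] (R T : List α) : Option (Sym2 α) :=
  ((R.zip T).find? (fun p => decide (p.1 ≠ p.2))).map (Function.uncurry Sym2.mk)

/-- `S(P)`: the sequence of switching pairs of a path of alike linear orders. -/
def switchSeq [DecidableEq α] (P : List (List α)) : List (Sym2 α) :=
  (P.zip P.tail).filterMap (fun p => switchPair? p.1 p.2)

/-- The restriction of a path to the subset `B`: restrict every member and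
remove consecutive duplicates. -/
def restrictPath [DecidableEq α] (P : List (List α)) (B : Finset α) : List (List α) :=
  (P.map (fun l => restrictOrd l B)).destutter (· ≠ ·)

/-- `D` is connected: any two of its members are joined by a path of alike
linear orders lying entirely in `D`. -/
def ConnectedDomain [DecidableEq α] (A : Finset α) (D : Set (List α)) : Prop :=
  ∀ R ∈ D, ∀ T ∈ D, ∃ P : List (List α), IsPath A P R T ∧ ∀ l ∈ P, l ∈ D

/-- `D` is directly connected: any two of its members are joined by a geodesic
lying entirely in `D`. -/
def DirectlyConnectedDomain [DecidableEq α] (A : Finset α) (D : Set (List α)) : Prop :=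
  ∀ R ∈ D, ∀ T ∈ D, ∃ P : List (List α), IsGeodesic A P R T ∧ ∀ l ∈ P, l ∈ D

/-- Two unordered pairs of alternatives are disjoint. -/
def DisjointPair (p q : Sym2 α) : Prop := ∀ x : α, x ∈ p → x ∉ q

/-- One swap of an adjacent disjoint pair of switching pairs in a sequence of
switching pairs. -/
inductive AdjSwap : List (Sym2 α) → List (Sym2 α) → Prop
  | swap (l₁ l₂ : List (Sym2 α)) (p q : Sym2 α) (h : DisjointPair p q) :
      AdjSwap (l₁ ++ p :: q :: l₂) (l₁ ++ q :: p :: l₂)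

/-- Two paths are equivalent if their sequences of switching pairs differ by a
finite number of swaps of adjacent disjoint pairs of switching pairs. -/
def PathEquiv [DecidableEq α] (P Q : List (List α)) : Prop :=
  Relation.ReflTransGen AdjSwap (switchSeq P) (switchSeq Q)

/-- Two domains are isomorphic if some bijection between the underlying sets of
alternatives maps one domain onto the other (acting position-wise on linear
orders). -/
def DomIsomorphic (A B : Finset α) (D E : Set (List α)) : Prop :=
  ∃ f : α → α, Set.BijOn f ↑A ↑B ∧ E = (fun l => l.map f) '' D

/-!
Every path of alike orders from `R` to `T` is longer than their Kemeny distance (the number of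
pairs on which they disagree), so it suffices that any two distinct `R, T ∈ D` are either alike
or have some `m ∈ D` strictly between them; then geodesics are assembled recursively.

To find `m`, let `y` be the first alternative of `T` outside the common prefix of `R` and `T`,
let `x` precede it in `R`, and let `W` be `R` with `x` and `y` swapped, which lies between `R`
and `T`. If `D ∪ {W}` is still peak-pit, then `W ∈ D` by maximality. Otherwise the only way it
can fail is a triple `{x, y, w}` on which `D` has `x` never last and some `V ∈ D` ranks `x` first
while `R` ranks `w` above `x` and `T` ranks `x` above `w`. The majority order of `R`, `T`, `V`
is then strictly between `R` and `T`, and it lies in `D`: by Sen's argument majority is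
transitive on a peak-pit domain, and the median inherits all never-first and never-last
conditions, so maximality applies again.
-/

section ListSwap

variable {l l₁ l₂ : List α} {a x y : α}

theorem List.Nodup.swap (h : (l₁ ++ x :: y :: l₂).Nodup) : (l₁ ++ y :: x :: l₂).Nodup :=
  ((List.Perm.swap y x l₂).append_left l₁).nodup_iff.1 h

theorem List.exists_cons_eq_append_cons_cons (hy : y ∈ l) :
    ∃ l₁ x l₂, a :: l = l₁ ++ x :: y :: l₂ := by
  induction l generalizing a with
  | nil => simp at hy
  | cons b l ih =>
    rcases List.mem_cons.1 hy with rfl | hy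
    · exact ⟨[], a, l, rfl⟩
    · obtain ⟨l₁, x, l₂, h⟩ := ih hy (a := b)
      exact ⟨a :: l₁, x, l₂, by rw [h]; rfl⟩

end ListSwap

section Prefers

variable [DecidableEq α] {A : Finset α} {l l' s t R T l₁ l₂ : List α} {k n : ℕ}
  {a u v w x y z : α}

def Prefers (l : List α) (u v : α) : Prop :=
  u ∈ l ∧ v ∈ l ∧ l.idxOf u < l.idxOf v

instance : Decidable (Prefers l u v) := inferInstanceAs (Decidable (_ ∧ _ ∧ _))

theorem Prefers.left_mem (h : Prefers l u v) : u ∈ l := h.1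

theorem Prefers.right_mem (h : Prefers l u v) : v ∈ l := h.2.1

theorem Prefers.ne (h : Prefers l u v) : u ≠ v := by
  rintro rfl
  exact lt_irrefl _ h.2.2

theorem Prefers.trans (h₁ : Prefers l u v) (h₂ : Prefers l v w) : Prefers l u w :=
  ⟨h₁.1, h₂.2.1, h₁.2.2.trans h₂.2.2⟩

theorem Prefers.not_prefers (h : Prefers l u v) : ¬Prefers l v u :=
  fun h' => lt_asymm h.2.2 h'.2.2

theorem prefers_or_prefers (hu : u ∈ l) (hv : v ∈ l) (huv : u ≠ v) :
    Prefers l u v ∨ Prefers l v u := by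
  rcases lt_trichotomy (l.idxOf u) (l.idxOf v) with h | h | h
  · exact .inl ⟨hu, hv, h⟩
  · exact absurd ((List.idxOf_inj hu).1 h) huv
  · exact .inr ⟨hv, hu, h⟩

theorem prefers_of_not_prefers (hu : u ∈ l) (hv : v ∈ l) (huv : u ≠ v)
    (h : ¬Prefers l v u) : Prefers l u v :=
  (prefers_or_prefers hu hv huv).resolve_right h

theorem prefers_cons_iff (ha : a ∉ l) :
    Prefers (a :: l) u v ↔ (u = a ∧ v ∈ l) ∨ Prefers l u v := by
  by_cases hu : u = a <;> by_cases hv : v = a <;>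
    simp_all [Prefers, List.idxOf_cons, eq_comm]

theorem prefers_iff_sublist (hl : l.Nodup) : Prefers l u v ↔ [u, v].Sublist l := by
  induction l with
  | nil => simp [Prefers]
  | cons a l ih =>
    rw [List.nodup_cons] at hl
    rw [prefers_cons_iff hl.1, ih hl.2, List.sublist_cons_iff]
    simp [eq_comm, or_comm]

theorem prefers_append_iff (h : (s ++ t).Nodup) :
    Prefers (s ++ t) u v ↔ Prefers s u v ∨ Prefers t u v ∨ (u ∈ s ∧ v ∈ t) := by
  induction s with
  | nil => simp [Prefers]
  | cons a s ih =>
    rw [List.cons_append, List.nodup_cons] at h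
    rw [List.cons_append, prefers_cons_iff h.1, ih h.2,
      prefers_cons_iff (fun has => h.1 (List.mem_append_left t has))]
    simp only [List.mem_append, List.mem_cons]
    constructor <;> rintro (⟨rfl, hv⟩ | h | h | ⟨hu, hv⟩) <;> tauto

theorem prefers_pair_iff (hxy : x ≠ y) : Prefers [x, y] u v ↔ u = x ∧ v = y := by
  by_cases hu : u = x <;> by_cases hv : v = y <;>
    simp_all [Prefers, List.idxOf_cons, beq_false_of_ne hxy]

theorem getElem?_eq_some_iff_idxOf (hl : l.Nodup) : l[k]? = some x ↔ x ∈ l ∧ l.idxOf x = k := by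
  constructor
  · intro h
    obtain ⟨hk, rfl⟩ := List.getElem?_eq_some_iff.1 h
    exact ⟨List.getElem_mem hk, hl.idxOf_getElem k hk⟩
  · rintro ⟨hx, rfl⟩
    exact List.getElem?_idxOf hx

theorem getElem?_zero_eq_some_iff_prefers (hl : l.Nodup) :
    l[0]? = some x ↔ x ∈ l ∧ ∀ y ∈ l, y ≠ x → Prefers l x y := by
  rw [getElem?_eq_some_iff_idxOf hl]
  refine ⟨fun ⟨hx, h0⟩ => ⟨hx, fun y hy hyx => ⟨hx, hy, ?_⟩⟩, fun ⟨hx, h⟩ => ⟨hx, ?_⟩⟩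
  · rw [h0, Nat.pos_iff_ne_zero, ← h0]
    exact fun h => hyx ((List.idxOf_inj hy).1 h)
  · have hl0 : 0 < l.length := List.length_pos_of_mem hx
    by_contra hx0
    have hy : l.idxOf l[0] = 0 := hl.idxOf_getElem 0 hl0
    have hyx : l[0] ≠ x := fun e => hx0 (e ▸ hy)
    have := (h _ (List.getElem_mem hl0) hyx).2.2
    omega

theorem getElem?_eq_some_iff_prefers_of_length_eq_add_one (hl : l.Nodup) (hn : l.length = n + 1) :
    l[n]? = some x ↔ x ∈ l ∧ ∀ y ∈ l, y ≠ x → Prefers l y x := by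
  rw [getElem?_eq_some_iff_idxOf hl]
  refine ⟨fun ⟨hx, hxn⟩ => ⟨hx, fun y hy hyx => ⟨hy, hx, ?_⟩⟩, fun ⟨hx, h⟩ => ⟨hx, ?_⟩⟩
  · have hlt := List.idxOf_lt_length_iff.2 hy
    have hne : l.idxOf y ≠ n := fun e => hyx ((List.idxOf_inj hy).1 (e.trans hxn.symm))
    omega
  · have hlt := List.idxOf_lt_length_iff.2 hx
    by_contra hxn
    have hy : l.idxOf l[n] = n := hl.idxOf_getElem n (by omega)
    have hyx : l[n] ≠ x := fun e => hxn (e ▸ hy)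
    have := (h _ (List.getElem_mem _) hyx).2.2
    omega

theorem eq_of_forall_prefers_imp (hl : IsLinOrd A l) (hl' : IsLinOrd A l')
    (h : ∀ u v, Prefers l u v → Prefers l' u v) : l = l' := by
  have hpair : ∀ {m : List α}, m.Nodup → (∀ u v, Prefers m u v → Prefers l' u v) →
      m.Pairwise (Prefers l') := fun hm hm' =>
    List.pairwise_of_forall_sublist fun hs => hm' _ _ ((prefers_iff_sublist hm).2 hs)
  exact (List.perm_of_nodup_nodup_toFinset_eq hl.1 hl'.1 (hl.2.trans hl'.2.symm)).eq_of_pairwise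
    (fun _ _ _ _ h₁ h₂ => absurd h₂ h₁.not_prefers) (hpair hl.1 h) (hpair hl'.1 fun _ _ => id)

theorem IsLinOrd.mem_iff (hl : IsLinOrd A l) : u ∈ l ↔ u ∈ A := by
  rw [← hl.2, List.mem_toFinset]

theorem IsLinOrd.perm (hl : IsLinOrd A l) (hp : l.Perm l') : IsLinOrd A l' :=
  ⟨hp.nodup_iff.1 hl.1, by rw [← List.toFinset_eq_of_perm _ _ hp, hl.2]⟩

theorem IsLinOrd.prefers_of_not_prefers (hl : IsLinOrd A l) (hu : u ∈ A) (hv : v ∈ A)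
    (huv : u ≠ v) (h : ¬Prefers l v u) : Prefers l u v :=
  _root_.prefers_of_not_prefers (hl.mem_iff.2 hu) (hl.mem_iff.2 hv) huv h

theorem Prefers.prefers_or_prefers (h : Prefers l u v) (hl : IsLinOrd A l) (hl' : IsLinOrd A l') :
    Prefers l' u v ∨ Prefers l' v u :=
  _root_.prefers_or_prefers (hl'.mem_iff.2 (hl.mem_iff.1 h.left_mem))
    (hl'.mem_iff.2 (hl.mem_iff.1 h.right_mem)) h.ne

theorem prefers_append_cons_cons (h : (l₁ ++ x :: y :: l₂).Nodup) :
    Prefers (l₁ ++ x :: y :: l₂) x y := by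
  have hne : x ≠ y := fun e => (List.nodup_cons.1 h.of_append_right).1 (by simp [e])
  rw [show x :: y :: l₂ = [x, y] ++ l₂ from rfl] at h ⊢
  rw [prefers_append_iff h, prefers_append_iff h.of_append_right, prefers_pair_iff hne]
  simp

theorem prefers_swap_iff (h : (l₁ ++ x :: y :: l₂).Nodup) (hxy : ¬(u = x ∧ v = y))
    (hyx : ¬(u = y ∧ v = x)) :
    Prefers (l₁ ++ y :: x :: l₂) u v ↔ Prefers (l₁ ++ x :: y :: l₂) u v := by
  have h' := h.swap
  have hne := (prefers_append_cons_cons h).ne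
  rw [show x :: y :: l₂ = [x, y] ++ l₂ from rfl] at h ⊢
  rw [show y :: x :: l₂ = [y, x] ++ l₂ from rfl] at h' ⊢
  rw [prefers_append_iff h, prefers_append_iff h.of_append_right,
    prefers_append_iff h', prefers_append_iff h'.of_append_right,
    prefers_pair_iff hne, prefers_pair_iff hne.symm]
  simp only [List.mem_append, List.mem_cons, List.not_mem_nil, or_false]
  tauto

theorem exists_adjacent_swap_toward (hR : R.Nodup) (hT : T.Nodup) (hRT : R.Perm T)
    (hne : R ≠ T) :
    ∃ l₁ l₂ x y, R = l₁ ++ x :: y :: l₂ ∧ Prefers T y x ∧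
      ∀ z, Prefers R y z → Prefers T y z := by
  induction R generalizing T with
  | nil => exact absurd (List.nil_perm.1 hRT).symm hne
  | cons a R ih =>
    cases T with
    | nil => simp at hRT
    | cons b T =>
      have hR' := List.nodup_cons.1 hR
      have hT' := List.nodup_cons.1 hT
      by_cases hab : a = b
      · subst hab
        obtain ⟨l₁, l₂, x, y, rfl, hyx, hdom⟩ :=
          ih hR'.2 hT'.2 ((List.perm_cons a).1 hRT) (fun h => hne (h ▸ rfl))
        refine ⟨a :: l₁, l₂, x, y, rfl, (prefers_cons_iff hT'.1).2 (.inr hyx), fun z hz => ?_⟩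
        rcases (prefers_cons_iff hR'.1).1 hz with ⟨rfl, -⟩ | hz
        · exact absurd (by simp) hR'.1
        · exact (prefers_cons_iff hT'.1).2 (.inr (hdom z hz))
      · -- `b` is the first alternative of `T` outside the common prefix of `R` and `T`
        have hbR : b ∈ R :=
          (List.mem_cons.1 (hRT.mem_iff.2 List.mem_cons_self)).resolve_left (Ne.symm hab)
        obtain ⟨l₁, x, l₂, hsplit⟩ := List.exists_cons_eq_append_cons_cons hbR (a := a)
        have hbtop : ∀ z ∈ a :: R, z ≠ b → Prefers (b :: T) b z := fun z hz hzb =>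
          (prefers_cons_iff hT'.1).2
            (.inl ⟨rfl, (List.mem_cons.1 (hRT.subset hz)).resolve_left hzb⟩)
        have hxb : x ≠ b := (prefers_append_cons_cons (hsplit ▸ hR)).ne
        refine ⟨l₁, l₂, x, b, hsplit, hbtop x (by simp [hsplit]) hxb, fun z hz => ?_⟩
        exact hbtop z hz.right_mem hz.ne.symm

end Prefers

section Kemeny

variable [DecidableEq α] {A : Finset α} {R T m l₁ l₂ : List α} {x y : α} {p : α × α}

def discordantPairs (R T : List α) : Finset (α × α) :=
  (R.toFinset ×ˢ R.toFinset).filter fun p => Prefers R p.1 p.2 ∧ Prefers T p.2 p.1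

def kemenyDist (R T : List α) : ℕ := (discordantPairs R T).card

theorem mem_discordantPairs : p ∈ discordantPairs R T ↔ Prefers R p.1 p.2 ∧ Prefers T p.2 p.1 := by
  simp only [discordantPairs, Finset.mem_filter, Finset.mem_product, List.mem_toFinset,
    and_iff_right_iff_imp]
  exact fun h => ⟨h.1.left_mem, h.1.right_mem⟩

theorem kemenyDist_self (R : List α) : kemenyDist R R = 0 := by
  simp only [kemenyDist, Finset.card_eq_zero, Finset.eq_empty_iff_forall_notMem,
    mem_discordantPairs]
  exact fun _ h => h.1.not_prefers h.2

theorem kemenyDist_eq_zero_iff (hR : IsLinOrd A R) (hT : IsLinOrd A T) :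
    kemenyDist R T = 0 ↔ R = T := by
  refine ⟨fun h => eq_of_forall_prefers_imp hR hT fun u v huv => ?_, fun h => h ▸ kemenyDist_self R⟩
  simp only [kemenyDist, Finset.card_eq_zero, Finset.eq_empty_iff_forall_notMem,
    mem_discordantPairs] at h
  exact (huv.prefers_or_prefers hR hT).resolve_right (h (u, v) ⟨huv, ·⟩)

theorem kemenyDist_le_add (hR : IsLinOrd A R) (hm : IsLinOrd A m) :
    kemenyDist R T ≤ kemenyDist R m + kemenyDist m T := by
  refine (Finset.card_le_card fun p hp => ?_).trans (Finset.card_union_le _ _)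
  rw [mem_discordantPairs] at hp
  rw [Finset.mem_union, mem_discordantPairs, mem_discordantPairs]
  rcases hp.1.prefers_or_prefers hR hm with h | h
  · exact .inr ⟨h, hp.2⟩
  · exact .inl ⟨hp.1, h⟩

def Between (R m T : List α) : Prop :=
  ∀ u v, Prefers R u v → Prefers T u v → Prefers m u v

theorem Between.kemenyDist_add (hb : Between R m T) (hR : IsLinOrd A R) (hm : IsLinOrd A m)
    (hT : IsLinOrd A T) : kemenyDist R m + kemenyDist m T = kemenyDist R T := by
  have hdisj : Disjoint (discordantPairs R m) (discordantPairs m T) :=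
    Finset.disjoint_left.2 fun p h₁ h₂ =>
      (mem_discordantPairs.1 h₁).2.not_prefers (mem_discordantPairs.1 h₂).1
  rw [kemenyDist, kemenyDist, ← Finset.card_union_of_disjoint hdisj]
  congr 1
  ext ⟨u, v⟩
  simp only [Finset.mem_union, mem_discordantPairs]
  constructor
  · rintro (⟨hRuv, hmvu⟩ | ⟨hmuv, hTvu⟩)
    · refine ⟨hRuv, (hRuv.prefers_or_prefers hR hT).resolve_left fun hTuv => ?_⟩
      exact hmvu.not_prefers (hb u v hRuv hTuv)
    · refine ⟨(hmuv.prefers_or_prefers hm hR).resolve_right fun hRvu => ?_, hTvu⟩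
      exact hmuv.not_prefers (hb v u hRvu hTvu)
  · rintro ⟨hRuv, hTvu⟩
    rcases hRuv.prefers_or_prefers hR hm with h | h
    · exact .inr ⟨h, hTvu⟩
    · exact .inl ⟨hRuv, h⟩

theorem between_swap (h : (l₁ ++ x :: y :: l₂).Nodup) (hT : Prefers T y x) :
    Between (l₁ ++ x :: y :: l₂) (l₁ ++ y :: x :: l₂) T := by
  intro u v hR hTuv
  refine (prefers_swap_iff h ?_ ?_).2 hR
  · rintro ⟨rfl, rfl⟩
    exact hT.not_prefers hTuv
  · rintro ⟨rfl, rfl⟩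
    exact (prefers_append_cons_cons h).not_prefers hR

theorem kemenyDist_swap (h : (l₁ ++ x :: y :: l₂).Nodup) :
    kemenyDist (l₁ ++ x :: y :: l₂) (l₁ ++ y :: x :: l₂) = 1 := by
  have h' := h.swap
  rw [kemenyDist, Finset.card_eq_one]
  refine ⟨(x, y), Finset.eq_singleton_iff_unique_mem.2 ⟨mem_discordantPairs.2
    ⟨prefers_append_cons_cons h, prefers_append_cons_cons h'⟩, fun ⟨u, v⟩ hp => ?_⟩⟩
  obtain ⟨hRuv, hWvu⟩ := mem_discordantPairs.1 hp
  by_contra hne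
  refine hRuv.not_prefers ((prefers_swap_iff h ?_ ?_).1 hWvu)
  · rintro ⟨rfl, rfl⟩
    exact (prefers_append_cons_cons h).not_prefers hRuv
  · rintro ⟨rfl, rfl⟩
    exact hne rfl

theorem Alike.kemenyDist_eq_one (hR : R.Nodup) (h : Alike R T) : kemenyDist R T = 1 := by
  obtain ⟨l₁, l₂, x, y, -, rfl, rfl⟩ := h
  exact kemenyDist_swap hR

end Kemeny

section Paths

variable [DecidableEq α] {A : Finset α} {D : Set (List α)} {P Q : List (List α)}
  {R T m : List α}

theorem IsPath.kemenyDist_lt_length (hP : IsPath A P R T) : kemenyDist R T < P.length := by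
  induction P generalizing R with
  | nil => exact absurd rfl hP.1.1
  | cons a P ih =>
    obtain ⟨⟨-, hlin, hchain⟩, hhead, hlast⟩ := hP
    obtain rfl : a = R := by simpa using hhead
    cases P with
    | nil =>
      obtain rfl : a = T := by simpa using hlast
      simp [kemenyDist_self]
    | cons b P =>
      obtain ⟨hab, hchain⟩ := List.isChain_cons_cons.1 hchain
      have hR := hlin a List.mem_cons_self
      have hb := hlin b (by simp)
      have hbT : kemenyDist b T < (b :: P).length :=
        ih ⟨⟨by simp, fun l hl => hlin l (List.mem_cons_of_mem a hl), hchain⟩, rfl,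
          by rwa [List.getLast?_cons_cons] at hlast⟩
      have := kemenyDist_le_add (T := T) hR hb
      rw [hab.kemenyDist_eq_one hR.1] at this
      rw [List.length_cons]
      omega

theorem isPath_singleton (hR : IsLinOrd A R) : IsPath A [R] R R :=
  ⟨⟨by simp, by simpa, List.isChain_singleton R⟩, rfl, rfl⟩

theorem Alike.isPath (h : Alike R T) (hR : IsLinOrd A R) (hT : IsLinOrd A T) :
    IsPath A [R, T] R T :=
  ⟨⟨by simp, by simp [hR, hT], List.isChain_pair.2 h⟩, rfl, rfl⟩

theorem IsPath.append (hP : IsPath A P R m) (hQ : IsPath A Q m T) :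
    IsPath A (P ++ Q.tail) R T := by
  obtain ⟨⟨hPne, hPlin, hPchain⟩, hPhead, hPlast⟩ := hP
  obtain ⟨⟨-, hQlin, hQchain⟩, hQhead, hQlast⟩ := hQ
  cases Q with
  | nil => simp at hQhead
  | cons q Q =>
    obtain rfl : q = m := by simpa using hQhead
    refine ⟨⟨by simp [hPne], ?_, hPchain.append hQchain.tail ?_⟩, ?_, ?_⟩
    · simp only [List.mem_append, List.tail_cons]
      rintro l (hl | hl)
      exacts [hPlin l hl, hQlin l (List.mem_cons_of_mem q hl)]
    · intro x hx y hy
      obtain rfl : x = q := by simp_all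
      exact List.isChain_cons.1 hQchain |>.1 y hy
    · simp [List.head?_append, hPhead]
    · rw [List.getLast?_cons] at hQlast
      cases h : Q.getLast? <;> simp_all [List.getLast?_append]

theorem exists_isPath_length_eq (hlin : ∀ l ∈ D, IsLinOrd A l)
    (hstep : ∀ R ∈ D, ∀ T ∈ D, R ≠ T → Alike R T ∨ ∃ m ∈ D, Between R m T ∧ m ≠ R ∧ m ≠ T)
    (hR : R ∈ D) (hT : T ∈ D) :
    ∃ P, IsPath A P R T ∧ P.length = kemenyDist R T + 1 ∧ ∀ l ∈ P, l ∈ D := by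
  induction hn : kemenyDist R T using Nat.strong_induction_on generalizing R T with
  | _ n ih =>
  rcases eq_or_ne R T with rfl | hne
  · exact ⟨[R], isPath_singleton (hlin R hR), by simp [← hn, kemenyDist_self], by simpa⟩
  rcases hstep R hR T hT hne with hRT | ⟨m, hm, hb, hmR, hmT⟩
  · refine ⟨[R, T], hRT.isPath (hlin R hR) (hlin T hT), ?_, by simp [hR, hT]⟩
    simp [← hn, hRT.kemenyDist_eq_one (hlin R hR).1]
  · have hadd := hb.kemenyDist_add (hlin R hR) (hlin m hm) (hlin T hT)
    have hRm : kemenyDist R m ≠ 0 := fun h =>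
      hmR ((kemenyDist_eq_zero_iff (hlin R hR) (hlin m hm)).1 h).symm
    have hmT' : kemenyDist m T ≠ 0 := fun h =>
      hmT ((kemenyDist_eq_zero_iff (hlin m hm) (hlin T hT)).1 h)
    obtain ⟨P, hP, hPlen, hPD⟩ := ih _ (by omega) hR hm rfl
    obtain ⟨Q, hQ, hQlen, hQD⟩ := ih _ (by omega) hm hT rfl
    refine ⟨P ++ Q.tail, hP.append hQ, ?_, ?_⟩
    · rw [List.length_append, List.length_tail]
      omega
    · simp only [List.mem_append]
      rintro l (hl | hl)
      exacts [hPD l hl, hQD l (List.mem_of_mem_tail hl)]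

theorem directlyConnectedDomain_of_forall_alike_or_between (hlin : ∀ l ∈ D, IsLinOrd A l)
    (hstep : ∀ R ∈ D, ∀ T ∈ D, R ≠ T → Alike R T ∨ ∃ m ∈ D, Between R m T ∧ m ≠ R ∧ m ≠ T) :
    DirectlyConnectedDomain A D := by
  intro R hR T hT
  obtain ⟨P, hP, hlen, hPD⟩ := exists_isPath_length_eq hlin hstep hR hT
  exact ⟨P, ⟨hP, fun Q hQ => hlen ▸ hQ.kemenyDist_lt_length⟩, hPD⟩

end Paths

section Restriction

variable [DecidableEq α] {A B : Finset α} {D : Set (List α)} {l : List α} {u v x : α}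

theorem nodup_restrictOrd (hl : l.Nodup) (B : Finset α) : (restrictOrd l B).Nodup :=
  hl.filter _

theorem mem_restrictOrd_iff (hl : IsLinOrd A l) (hB : B ⊆ A) : u ∈ restrictOrd l B ↔ u ∈ B := by
  simp only [restrictOrd, List.mem_filter, decide_eq_true_eq, hl.mem_iff, and_iff_right_iff_imp]
  exact (hB ·)

theorem prefers_restrictOrd_iff (hl : l.Nodup) :
    Prefers (restrictOrd l B) u v ↔ Prefers l u v ∧ u ∈ B ∧ v ∈ B := by
  rw [prefers_iff_sublist (nodup_restrictOrd hl B), prefers_iff_sublist hl, restrictOrd]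
  constructor
  · intro h
    have hmem := fun w (hw : w ∈ [u, v]) => List.of_mem_filter (h.subset hw)
    exact ⟨h.trans List.filter_sublist, by simpa using hmem u (by simp),
      by simpa using hmem v (by simp)⟩
  · rintro ⟨h, hu, hv⟩
    simpa [hu, hv] using h.filter (fun w => decide (w ∈ B))

def RanksFirst (l : List α) (B : Finset α) (x : α) : Prop :=
  ∀ y ∈ B, y ≠ x → Prefers l x y

def RanksLast (l : List α) (B : Finset α) (x : α) : Prop :=
  ∀ y ∈ B, y ≠ x → Prefers l y x

theorem restrictOrd_getElem?_zero_eq_some_iff (hl : IsLinOrd A l) (hB : B ⊆ A) :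
    (restrictOrd l B)[0]? = some x ↔ x ∈ B ∧ RanksFirst l B x := by
  rw [getElem?_zero_eq_some_iff_prefers (nodup_restrictOrd hl.1 B), mem_restrictOrd_iff hl hB]
  simp only [RanksFirst, mem_restrictOrd_iff hl hB, prefers_restrictOrd_iff hl.1]
  exact and_congr_right fun hx => forall₂_congr fun y hy => by simp [hx, hy]

theorem restrictOrd_getElem?_two_eq_some_iff (hl : IsLinOrd A l) (hB : B ⊆ A) (h3 : B.card = 3) :
    (restrictOrd l B)[2]? = some x ↔ x ∈ B ∧ RanksLast l B x := by
  have hlen : (restrictOrd l B).length = 2 + 1 := by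
    change _ = 3
    rw [← List.toFinset_card_of_nodup (nodup_restrictOrd hl.1 B), ← h3]
    congr 1
    ext u
    rw [List.mem_toFinset, mem_restrictOrd_iff hl hB]
  rw [getElem?_eq_some_iff_prefers_of_length_eq_add_one (nodup_restrictOrd hl.1 B) hlen,
    mem_restrictOrd_iff hl hB]
  simp only [RanksLast, mem_restrictOrd_iff hl hB, prefers_restrictOrd_iff hl.1]
  exact and_congr_right fun hx => forall₂_congr fun y hy => by simp [hx, hy]

theorem neverCond_restrictDom_zero_iff (hD : ∀ l ∈ D, IsLinOrd A l) (hB : B ⊆ A) (hx : x ∈ B) :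
    NeverCond (restrictDom D B) x 0 ↔ ∀ l ∈ D, ¬RanksFirst l B x := by
  simp only [NeverCond, restrictDom, Set.forall_mem_image]
  exact forall₂_congr fun l hl => by
    simp [restrictOrd_getElem?_zero_eq_some_iff (hD l hl) hB, hx]

theorem neverCond_restrictDom_two_iff (hD : ∀ l ∈ D, IsLinOrd A l) (hB : B ⊆ A) (h3 : B.card = 3)
    (hx : x ∈ B) : NeverCond (restrictDom D B) x 2 ↔ ∀ l ∈ D, ¬RanksLast l B x := by
  simp only [NeverCond, restrictDom, Set.forall_mem_image]
  exact forall₂_congr fun l hl => by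
    simp [restrictOrd_getElem?_two_eq_some_iff (hD l hl) hB h3, hx]

theorem isPeakPitDomain_iff : IsPeakPitDomain A D ↔ (∀ l ∈ D, IsLinOrd A l) ∧
    ∀ B ⊆ A, B.card = 3 → ∃ x ∈ B, (∀ l ∈ D, ¬RanksFirst l B x) ∨ (∀ l ∈ D, ¬RanksLast l B x) := by
  refine and_congr_right fun hD => ⟨fun h B hB h3 => ?_, fun h a b c ha hb hc hab hac hbc => ?_⟩
  · obtain ⟨a, b, c, hab, hac, hbc, rfl⟩ := Finset.card_eq_three.1 h3
    obtain ⟨x, hx, hcond⟩ := h a b c (hB (by simp)) (hB (by simp)) (hB (by simp)) hab hac hbc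
    rw [neverCond_restrictDom_zero_iff hD hB hx, neverCond_restrictDom_two_iff hD hB h3 hx]
      at hcond
    exact ⟨x, hx, hcond⟩
  · have hB : ({a, b, c} : Finset α) ⊆ A := by simp [Finset.insert_subset_iff, ha, hb, hc]
    have h3 : ({a, b, c} : Finset α).card = 3 :=
      Finset.card_eq_three.2 ⟨a, b, c, hab, hac, hbc, rfl⟩
    obtain ⟨x, hx, hcond⟩ := h _ hB h3
    rw [← neverCond_restrictDom_zero_iff hD hB hx, ← neverCond_restrictDom_two_iff hD hB h3 hx]
      at hcond
    exact ⟨x, hx, hcond⟩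

end Restriction

section Majority

variable [DecidableEq α] {A : Finset α} {D : Set (List α)} {R T V : List α} {u v u' v' : α}

def Majority (R T V : List α) (u v : α) : Prop :=
  Prefers R u v ∧ Prefers T u v ∨ Prefers R u v ∧ Prefers V u v ∨ Prefers T u v ∧ Prefers V u v

theorem Majority.ne (h : Majority R T V u v) : u ≠ v := by
  rcases h with ⟨h, -⟩ | ⟨h, -⟩ | ⟨h, -⟩ <;> exact h.ne

theorem Majority.mem (h : Majority R T V u v) (hR : IsLinOrd A R) (hT : IsLinOrd A T) :
    u ∈ A ∧ v ∈ A := by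
  rcases h with ⟨h, -⟩ | ⟨h, -⟩ | ⟨h, -⟩
  exacts [⟨hR.mem_iff.1 h.left_mem, hR.mem_iff.1 h.right_mem⟩,
    ⟨hR.mem_iff.1 h.left_mem, hR.mem_iff.1 h.right_mem⟩,
    ⟨hT.mem_iff.1 h.left_mem, hT.mem_iff.1 h.right_mem⟩]

theorem Majority.exists_common (hR : R ∈ D) (hT : T ∈ D) (hV : V ∈ D)
    (h : Majority R T V u v) (h' : Majority R T V u' v') :
    ∃ O ∈ D, Prefers O u v ∧ Prefers O u' v' := by
  rcases h with ⟨h₁, h₂⟩ | ⟨h₁, h₂⟩ | ⟨h₁, h₂⟩ <;>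
    rcases h' with ⟨h₁', h₂'⟩ | ⟨h₁', h₂'⟩ | ⟨h₁', h₂'⟩ <;>
    first
    | exact ⟨R, hR, ‹_›, ‹_›⟩
    | exact ⟨T, hT, ‹_›, ‹_›⟩
    | exact ⟨V, hV, ‹_›, ‹_›⟩

theorem Majority.not_majority (h : Majority R T V u v) : ¬Majority R T V v u := fun h' =>
  let ⟨_, _, h₁, h₂⟩ := h.exists_common (D := {R, T, V}) (by simp) (by simp) (by simp) h'
  h₁.not_prefers h₂

theorem Majority.mono (hR : R ∈ D) (hT : T ∈ D) (hV : V ∈ D)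
    (hmono : ∀ O ∈ D, Prefers O u v → Prefers O u' v') (h : Majority R T V u v) :
    Majority R T V u' v' := by
  rcases h with ⟨h₁, h₂⟩ | ⟨h₁, h₂⟩ | ⟨h₁, h₂⟩
  · exact .inl ⟨hmono R hR h₁, hmono T hT h₂⟩
  · exact .inr (.inl ⟨hmono R hR h₁, hmono V hV h₂⟩)
  · exact .inr (.inr ⟨hmono T hT h₁, hmono V hV h₂⟩)

theorem majority_or_majority (hR : IsLinOrd A R) (hT : IsLinOrd A T) (hV : IsLinOrd A V)
    (hu : u ∈ A) (hv : v ∈ A) (huv : u ≠ v) :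
    Majority R T V u v ∨ Majority R T V v u := by
  have := prefers_or_prefers (hR.mem_iff.2 hu) (hR.mem_iff.2 hv) huv
  have := prefers_or_prefers (hT.mem_iff.2 hu) (hT.mem_iff.2 hv) huv
  have := prefers_or_prefers (hV.mem_iff.2 hu) (hV.mem_iff.2 hv) huv
  unfold Majority
  tauto

end Majority

section Median

variable [DecidableEq α] {A B : Finset α} {D : Set (List α)} {R T V m : List α} {u v w x : α}

theorem exists_pair_of_card_eq_three (h3 : B.card = 3) (hx : x ∈ B) :
    ∃ y₁ ∈ B, ∃ y₂ ∈ B, y₁ ≠ x ∧ y₂ ≠ x ∧ ∀ y ∈ B, y ≠ x → y = y₁ ∨ y = y₂ := by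
  obtain ⟨y₁, y₂, -, he⟩ := Finset.card_eq_two.1 (by rw [Finset.card_erase_of_mem hx, h3] :
    (B.erase x).card = 2)
  have h₁ : y₁ ∈ B.erase x := he ▸ by simp
  have h₂ : y₂ ∈ B.erase x := he ▸ by simp
  refine ⟨y₁, Finset.mem_of_mem_erase h₁, y₂, Finset.mem_of_mem_erase h₂,
    Finset.ne_of_mem_erase h₁, Finset.ne_of_mem_erase h₂, fun y hy hyx => ?_⟩
  have hy' : y ∈ B.erase x := Finset.mem_erase.2 ⟨hyx, hy⟩
  simpa [he] using hy'

/-- Sen's argument: under `u` never first, voters ranking `u` over `v` rank `w` over `v`;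
under `u` never last, voters ranking `w` over `u` rank `w` over `v`. -/
theorem not_majority_cycle (hlin : ∀ l ∈ D, IsLinOrd A l) (hR : R ∈ D) (hT : T ∈ D) (hV : V ∈ D)
    (hB : ∀ y ∈ B, y = u ∨ y = v ∨ y = w)
    (hcond : (∀ l ∈ D, ¬RanksFirst l B u) ∨ (∀ l ∈ D, ¬RanksLast l B u))
    (h₁ : Majority R T V u v) (h₂ : Majority R T V v w) (h₃ : Majority R T V w u) : False := by
  obtain ⟨hw, hu⟩ := h₃.mem (hlin R hR) (hlin T hT)
  have hv := (h₂.mem (hlin R hR) (hlin T hT)).1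
  refine h₂.not_majority ?_
  rcases hcond with hfirst | hlast
  · refine h₁.mono hR hT hV fun O hO hOuv => ?_
    obtain ⟨y, hy, hyu, hOuy⟩ : ∃ y ∈ B, y ≠ u ∧ ¬Prefers O u y := by
      simpa [RanksFirst] using hfirst O hO
    rcases hB y hy with rfl | rfl | rfl
    · exact absurd rfl hyu
    · exact absurd hOuv hOuy
    · exact ((hlin O hO).prefers_of_not_prefers hw hu h₃.ne hOuy).trans hOuv
  · refine h₃.mono hR hT hV fun O hO hOwu => ?_
    obtain ⟨y, hy, hyu, hOyu⟩ : ∃ y ∈ B, y ≠ u ∧ ¬Prefers O y u := by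
      simpa [RanksLast] using hlast O hO
    rcases hB y hy with rfl | rfl | rfl
    · exact absurd rfl hyu
    · exact hOwu.trans ((hlin O hO).prefers_of_not_prefers hu hv h₁.ne hOyu)
    · exact absurd hOwu hOyu

theorem Majority.trans (hD : IsPeakPitDomain A D) (hR : R ∈ D) (hT : T ∈ D) (hV : V ∈ D)
    (h₁ : Majority R T V u v) (h₂ : Majority R T V v w) : Majority R T V u w := by
  obtain ⟨hlin, hD⟩ := isPeakPitDomain_iff.1 hD
  obtain ⟨hu, hv⟩ := h₁.mem (hlin R hR) (hlin T hT)
  have hw := (h₂.mem (hlin R hR) (hlin T hT)).2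
  rcases eq_or_ne u w with rfl | huw
  · exact absurd h₂ h₁.not_majority
  refine (majority_or_majority (hlin R hR) (hlin T hT) (hlin V hV) hu hw huw).resolve_right
    fun h₃ => ?_
  have h3 : ({u, v, w} : Finset α).card = 3 :=
    Finset.card_eq_three.2 ⟨u, v, w, h₁.ne, huw, h₂.ne, rfl⟩
  obtain ⟨x, hx, hcond⟩ := hD {u, v, w} (by simp [Finset.insert_subset_iff, hu, hv, hw]) h3
  have hB : ∀ y ∈ ({u, v, w} : Finset α), y = u ∨ y = v ∨ y = w := by simp
  simp only [Finset.mem_insert, Finset.mem_singleton] at hx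
  rcases hx with rfl | rfl | rfl
  · exact not_majority_cycle hlin hR hT hV hB hcond h₁ h₂ h₃
  · exact not_majority_cycle hlin hR hT hV (fun y hy => by have := hB y hy; tauto) hcond h₂ h₃ h₁
  · exact not_majority_cycle hlin hR hT hV (fun y hy => by have := hB y hy; tauto) hcond h₃ h₁ h₂

theorem exists_isLinOrd_prefers_iff (r : α → α → Prop) (hmem : ∀ u v, r u v → u ∈ A ∧ v ∈ A)
    (hasymm : ∀ u v, r u v → ¬r v u) (htotal : ∀ u ∈ A, ∀ v ∈ A, u ≠ v → r u v ∨ r v u)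
    (htrans : ∀ u v w, r u v → r v w → r u w) :
    ∃ l, IsLinOrd A l ∧ ∀ u v, Prefers l u v ↔ r u v := by
  classical
  -- `¬r b a` is total and transitive only on `A`, hence sorting the subtype
  let le : {a // a ∈ A.toList} → {a // a ∈ A.toList} → Bool := fun a b => !decide (r b.1 a.1)
  have hsorted : (A.toList.attach.mergeSort le).Pairwise (le · ·) := by
    refine List.pairwise_mergeSort (fun a b c hab hbc => ?_) (fun a b => ?_) _
    · simp only [le, Bool.not_eq_eq_eq_not, Bool.not_true, decide_eq_false_iff_not] at hab hbc ⊢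
      intro hca
      have hab' : a.1 ≠ b.1 := fun e => hbc (e ▸ hca)
      have := htotal a.1 (Finset.mem_toList.1 a.2) b.1 (Finset.mem_toList.1 b.2) hab'
      exact hbc (htrans _ _ _ hca (this.resolve_right hab))
    · by_cases h : r b.1 a.1
      · simp [le, hasymm _ _ h]
      · simp [le, h]
  set l := (A.toList.attach.mergeSort le).map Subtype.val
  have hperm : l.Perm A.toList := by
    have := (List.mergeSort_perm A.toList.attach le).map Subtype.val
    rwa [List.attach_map_subtype_val] at this
  have hl : IsLinOrd A l :=
    ⟨hperm.nodup_iff.2 A.nodup_toList,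
      by rw [List.toFinset_eq_of_perm _ _ hperm, Finset.toList_toFinset]⟩
  have hpair : ∀ {u v}, Prefers l u v → ¬r v u := fun h =>
    (List.pairwise_map.2 (hsorted.imp fun h => by simpa [le] using h) :
      l.Pairwise fun a b => ¬r b a).forall_sublist ((prefers_iff_sublist hl.1).1 h)
  refine ⟨l, hl, fun u v => ⟨fun h => ?_, fun h => ?_⟩⟩
  · exact (htotal u (hl.mem_iff.1 h.left_mem) v (hl.mem_iff.1 h.right_mem) h.ne).resolve_right
      (hpair h)
  · obtain ⟨hu, hv⟩ := hmem u v h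
    have huv : u ≠ v := by
      rintro rfl
      exact hasymm u u h h
    exact hl.prefers_of_not_prefers hu hv huv fun h' => hpair h' h

theorem exists_median (hD : IsPeakPitDomain A D) (hR : R ∈ D) (hT : T ∈ D) (hV : V ∈ D) :
    ∃ m, IsLinOrd A m ∧ ∀ u v, Prefers m u v ↔ Majority R T V u v :=
  exists_isLinOrd_prefers_iff _ (fun _ _ h => h.mem (hD.1 R hR) (hD.1 T hT))
    (fun _ _ h => h.not_majority)
    (fun _ hu _ hv huv => majority_or_majority (hD.1 R hR) (hD.1 T hT) (hD.1 V hV) hu hv huv)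
    (fun _ _ _ => Majority.trans hD hR hT hV)

theorem Majority.exists_ranksFirst (hR : R ∈ D) (hT : T ∈ D) (hV : V ∈ D) (h3 : B.card = 3)
    (hx : x ∈ B) (h : ∀ y ∈ B, y ≠ x → Majority R T V x y) : ∃ O ∈ D, RanksFirst O B x := by
  obtain ⟨y₁, hy₁, y₂, hy₂, h₁x, h₂x, hB⟩ := exists_pair_of_card_eq_three h3 hx
  obtain ⟨O, hO, h₁, h₂⟩ := (h y₁ hy₁ h₁x).exists_common hR hT hV (h y₂ hy₂ h₂x)
  exact ⟨O, hO, fun y hy hyx => (hB y hy hyx).elim (· ▸ h₁) (· ▸ h₂)⟩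

theorem Majority.exists_ranksLast (hR : R ∈ D) (hT : T ∈ D) (hV : V ∈ D) (h3 : B.card = 3)
    (hx : x ∈ B) (h : ∀ y ∈ B, y ≠ x → Majority R T V y x) : ∃ O ∈ D, RanksLast O B x := by
  obtain ⟨y₁, hy₁, y₂, hy₂, h₁x, h₂x, hB⟩ := exists_pair_of_card_eq_three h3 hx
  obtain ⟨O, hO, h₁, h₂⟩ := (h y₁ hy₁ h₁x).exists_common hR hT hV (h y₂ hy₂ h₂x)
  exact ⟨O, hO, fun y hy hyx => (hB y hy hyx).elim (· ▸ h₁) (· ▸ h₂)⟩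

/-- The median inherits every never-first and never-last condition from the three orders. -/
theorem median_mem (hD : Maximal (IsPeakPitDomain A) D) (hR : R ∈ D) (hT : T ∈ D) (hV : V ∈ D)
    (hm : IsLinOrd A m) (hmaj : ∀ u v, Prefers m u v ↔ Majority R T V u v) : m ∈ D := by
  obtain ⟨hlin, hcond⟩ := isPeakPitDomain_iff.1 hD.1
  refine hD.mem_of_prop_insert (isPeakPitDomain_iff.2 ⟨Set.forall_mem_insert.2 ⟨hm, hlin⟩,
    fun B hB h3 => ?_⟩)
  obtain ⟨x, hx, hfirst | hlast⟩ := hcond B hB h3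
  · refine ⟨x, hx, .inl (Set.forall_mem_insert.2 ⟨fun hmx => ?_, hfirst⟩)⟩
    obtain ⟨O, hO, hOx⟩ := Majority.exists_ranksFirst hR hT hV h3 hx
      fun y hy hyx => (hmaj x y).1 (hmx y hy hyx)
    exact hfirst O hO hOx
  · refine ⟨x, hx, .inr (Set.forall_mem_insert.2 ⟨fun hmx => ?_, hlast⟩)⟩
    obtain ⟨O, hO, hOx⟩ := Majority.exists_ranksLast hR hT hV h3 hx
      fun y hy hyx => (hmaj y x).1 (hmx y hy hyx)
    exact hlast O hO hOx

end Median

section Swap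

variable [DecidableEq α] {A B : Finset α} {D : Set (List α)} {l₁ l₂ R T : List α} {x y z : α}

theorem ranksFirst_swap_iff (h : (l₁ ++ x :: y :: l₂).Nodup) (hx : z = x → y ∉ B)
    (hy : z = y → x ∉ B) :
    RanksFirst (l₁ ++ y :: x :: l₂) B z ↔ RanksFirst (l₁ ++ x :: y :: l₂) B z :=
  forall₂_congr fun _ hu => imp_congr_right fun _ =>
    prefers_swap_iff h (fun ⟨e₁, e₂⟩ => hx e₁ (e₂ ▸ hu)) (fun ⟨e₁, e₂⟩ => hy e₁ (e₂ ▸ hu))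

theorem ranksLast_swap_iff (h : (l₁ ++ x :: y :: l₂).Nodup) (hx : z = x → y ∉ B)
    (hy : z = y → x ∉ B) :
    RanksLast (l₁ ++ y :: x :: l₂) B z ↔ RanksLast (l₁ ++ x :: y :: l₂) B z :=
  forall₂_congr fun _ hu => imp_congr_right fun _ =>
    prefers_swap_iff h (fun ⟨e₁, e₂⟩ => hy e₂ (e₁ ▸ hu)) (fun ⟨e₁, e₂⟩ => hx e₂ (e₁ ▸ hu))

theorem not_ranksFirst_swap (hlin : ∀ l ∈ D, IsLinOrd A l) (hR : l₁ ++ x :: y :: l₂ ∈ D)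
    (hT : T ∈ D) (hTyx : Prefers T y x)
    (hdom : ∀ z, Prefers (l₁ ++ x :: y :: l₂) y z → Prefers T y z)
    (hnever : ∀ l ∈ D, ¬RanksFirst l B z) : ¬RanksFirst (l₁ ++ y :: x :: l₂) B z := by
  intro hW
  have hnd := (hlin _ hR).1
  have hxy := (prefers_append_cons_cons hnd).ne
  by_cases hzx : z = x ∧ y ∈ B
  · obtain ⟨rfl, hyB⟩ := hzx
    exact (prefers_append_cons_cons (hnd.swap)).not_prefers (hW y hyB hxy.symm)
  by_cases hzy : z = y ∧ x ∈ B
  · obtain ⟨rfl, -⟩ := hzy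
    refine hnever T hT fun u hu huz => ?_
    rcases eq_or_ne u x with rfl | hux
    · exact hTyx
    · exact hdom u ((prefers_swap_iff hnd (by tauto) (by tauto)).1 (hW u hu huz))
  · exact hnever _ hR ((ranksFirst_swap_iff hnd (fun e hy => hzx ⟨e, hy⟩)
      (fun e hx => hzy ⟨e, hx⟩)).1 hW)

theorem exists_of_ranksLast_swap (hlin : ∀ l ∈ D, IsLinOrd A l) (hR : l₁ ++ x :: y :: l₂ ∈ D)
    (hT : T ∈ D) (hB : B ⊆ A) (hTyx : Prefers T y x) (hnever : ∀ l ∈ D, ¬RanksLast l B z)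
    (hW : RanksLast (l₁ ++ y :: x :: l₂) B z) :
    z = x ∧ y ∈ B ∧ ∃ w ∈ B, Prefers (l₁ ++ x :: y :: l₂) w x ∧ Prefers T x w := by
  have hnd := (hlin _ hR).1
  have hxy := (prefers_append_cons_cons hnd).ne
  by_cases hzy : z = y ∧ x ∈ B
  · obtain ⟨rfl, hxB⟩ := hzy
    exact absurd (hW x hxB hxy) (prefers_append_cons_cons hnd.swap).not_prefers
  by_cases hzx : z = x ∧ y ∈ B
  · obtain ⟨rfl, hyB⟩ := hzx
    obtain ⟨w, hwB, hwz, hTwz⟩ : ∃ w ∈ B, w ≠ z ∧ ¬Prefers T w z := by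
      simpa [RanksLast] using hnever T hT
    have hwy : w ≠ y := by
      rintro rfl
      exact hTwz hTyx
    refine ⟨rfl, hyB, w, hwB, (prefers_swap_iff hnd (by tauto) (by tauto)).1 (hW w hwB hwz),
      prefers_of_not_prefers hTyx.right_mem ((hlin T hT).mem_iff.2 (hB hwB)) hwz.symm hTwz⟩
  · exact absurd ((ranksLast_swap_iff hnd (fun e hy => hzx ⟨e, hy⟩)
      (fun e hx => hzy ⟨e, hx⟩)).1 hW) (hnever _ hR)

theorem isPeakPitDomain_insert_swap_or_exists (hD : IsPeakPitDomain A D)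
    (hR : l₁ ++ x :: y :: l₂ ∈ D) (hT : T ∈ D) (hTyx : Prefers T y x)
    (hdom : ∀ z, Prefers (l₁ ++ x :: y :: l₂) y z → Prefers T y z) :
    IsPeakPitDomain A (insert (l₁ ++ y :: x :: l₂) D) ∨
      ∃ V ∈ D, ∃ w, Prefers (l₁ ++ x :: y :: l₂) w x ∧ Prefers T x w ∧ Prefers V x w ∧
        Prefers V x y := by
  obtain ⟨hlin, hcond⟩ := isPeakPitDomain_iff.1 hD
  have hnd := (hlin _ hR).1
  have hxy := (prefers_append_cons_cons hnd).ne
  have hW : IsLinOrd A (l₁ ++ y :: x :: l₂) :=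
    (hlin _ hR).perm ((List.Perm.swap y x l₂).append_left l₁)
  refine or_iff_not_imp_right.2 fun hno => isPeakPitDomain_iff.2
    ⟨Set.forall_mem_insert.2 ⟨hW, hlin⟩, fun B hB h3 => ?_⟩
  obtain ⟨z, hz, hfirst | hlast⟩ := hcond B hB h3
  · exact ⟨z, hz, .inl (Set.forall_mem_insert.2
      ⟨not_ranksFirst_swap hlin hR hT hTyx hdom hfirst, hfirst⟩)⟩
  by_cases hWz : RanksLast (l₁ ++ y :: x :: l₂) B z
  · obtain ⟨rfl, hyB, w, hwB, hRwz, hTzw⟩ := exists_of_ranksLast_swap hlin hR hT hB hTyx hlast hWz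
    refine ⟨z, hz, .inl (Set.forall_mem_insert.2 ⟨fun hWz' => ?_, fun V hV hVz => ?_⟩)⟩
    · exact (prefers_append_cons_cons hnd.swap).not_prefers (hWz' y hyB hxy.symm)
    · exact hno ⟨V, hV, w, hRwz, hTzw, hVz w hwB hRwz.ne, hVz y hyB hxy.symm⟩
  · exact ⟨z, hz, .inr (Set.forall_mem_insert.2 ⟨hWz, hlast⟩)⟩

theorem alike_or_exists_between (hD : Maximal (IsPeakPitDomain A) D) (hR : R ∈ D) (hT : T ∈ D)
    (hne : R ≠ T) : Alike R T ∨ ∃ m ∈ D, Between R m T ∧ m ≠ R ∧ m ≠ T := by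
  have hlin := hD.1.1
  have hRT : R.Perm T := List.perm_of_nodup_nodup_toFinset_eq (hlin R hR).1 (hlin T hT).1
    ((hlin R hR).2.trans (hlin T hT).2.symm)
  obtain ⟨l₁, l₂, x, y, rfl, hTyx, hdom⟩ :=
    exists_adjacent_swap_toward (hlin _ hR).1 (hlin T hT).1 hRT hne
  have hnd := (hlin _ hR).1
  have hRxy := prefers_append_cons_cons hnd
  rcases isPeakPitDomain_insert_swap_or_exists hD.1 hR hT hTyx hdom with
    hins | ⟨V, hV, w, hRwx, hTxw, hVxw, hVxy⟩
  · have hRW : Alike (l₁ ++ x :: y :: l₂) (l₁ ++ y :: x :: l₂) := ⟨l₁, l₂, x, y, hRxy.ne, rfl, rfl⟩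
    by_cases hWT : l₁ ++ y :: x :: l₂ = T
    · exact .inl (hWT ▸ hRW)
    · refine .inr ⟨_, hD.mem_of_prop_insert hins, between_swap hnd hTyx, fun e => ?_, hWT⟩
      exact hRxy.not_prefers (e ▸ prefers_append_cons_cons hnd.swap)
  · obtain ⟨m, hm, hmaj⟩ := exists_median hD.1 hR hT hV
    have hbetween : Between (l₁ ++ x :: y :: l₂) m T := fun u v h₁ h₂ =>
      (hmaj u v).2 (.inl ⟨h₁, h₂⟩)
    refine .inr ⟨m, median_mem hD hR hT hV hm hmaj, hbetween, ?_, ?_⟩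
    · rintro rfl
      exact hRwx.not_prefers ((hmaj x w).2 (.inr (.inr ⟨hTxw, hVxw⟩)))
    · rintro rfl
      exact hTyx.not_prefers ((hmaj x y).2 (.inr (.inl ⟨hRxy, hVxy⟩)))

end Swap

/-- Every maximal peak-pit Condorcet domain on a finite set `A`
is directly connected. -/
theorem maximal_peakPit_directlyConnected [DecidableEq α] (A : Finset α)
    (D : Set (List α)) (hD : IsPeakPitDomain A D)
    (hmax : ∀ D' : Set (List α), IsPeakPitDomain A D' → D ⊆ D' → D = D') :
    DirectlyConnectedDomain A D := by
  have hDmax : Maximal (IsPeakPitDomain A) D := ⟨hD, fun D' hD' hle => (hmax D' hD' hle).ge⟩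
  exact directlyConnectedDomain_of_forall_alike_or_between hD.1 fun R hR T hT hne =>
    alike_or_exists_between hDmax hR hT hne
end

section
/- Let 𝒜 be a path of alike linear orders on L(A) and let a, b, c ∈ A be distinct alternatives. Then the number of occurrences of the switching pair (a,b) in S(𝒜) equals the number of occurrences of the switching pair (a,b) in S(𝒜_{{a,b,c}}). -/
/-!
Common definitions for formalizing Condorcet domains.

A linear order on a finite set `A : Finset α` of alternatives is encoded as a
duplicate-free list enumerating the elements of `A` from most preferred (head)
to least preferred (last).
-/

variable {α : Type*}

/-!
Restricting to a set `B` containing `a` and `b` turns each step of the path, which swaps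
some adjacent `x, y`, either into a step with the same switching pair `s(x, y)` (if `x, y ∈ B`)
or into a repetition, which contributes no switching pair and which `restrictPath` deletes.
Hence the steps switching `a` and `b` survive one for one.
-/

theorem List.exists_destutter'_eq_cons {β : Type*} (R : β → β → Prop) [DecidableRel R]
    (l : List β) (a : β) : ∃ t, l.destutter' R a = a :: t := by
  induction l generalizing a with
  | nil => exact ⟨[], rfl⟩
  | cons b l ih =>
    rw [List.destutter'_cons]
    split_ifs
    · exact ⟨_, rfl⟩
    · exact ih a

section Switching

variable [DecidableEq α]

lemma switchPair?_append (l u v : List α) :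
    switchPair? (l ++ u) (l ++ v) = switchPair? u v := by
  induction l with
  | nil => rfl
  | cons z l ih => simpa [switchPair?, List.find?] using ih

lemma switchPair?_self (l : List α) : switchPair? l l = none := by
  have h := switchPair?_append l [] []
  rwa [List.append_nil] at h

lemma switchPair?_swap {x y : α} (h : x ≠ y) (l : List α) :
    switchPair? (x :: y :: l) (y :: x :: l) = some s(x, y) := by
  simp [switchPair?, h]

lemma switchPair?_restrictOrd_swap (B : Finset α) {x y : α} (hxy : x ≠ y) (l₁ l₂ : List α) :
    switchPair? (restrictOrd (l₁ ++ x :: y :: l₂) B) (restrictOrd (l₁ ++ y :: x :: l₂) B) =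
      if x ∈ B ∧ y ∈ B then some s(x, y) else none := by
  simp only [restrictOrd, List.filter_append, List.filter_cons, decide_eq_true_eq]
  by_cases hx : x ∈ B <;> by_cases hy : y ∈ B <;>
    simp [hx, hy, switchPair?_append, switchPair?_swap hxy, switchPair?_self]

lemma count_switchPair?_restrictOrd_of_alike {B : Finset α} {a b : α} (haB : a ∈ B)
    (hbB : b ∈ B) {R T : List α} (hRT : Alike R T) :
    (switchPair? (restrictOrd R B) (restrictOrd T B)).toList.count s(a, b) =
      (switchPair? R T).toList.count s(a, b) := by
  obtain ⟨l₁, l₂, x, y, hxy, rfl, rfl⟩ := hRT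
  rw [switchPair?_restrictOrd_swap B hxy, switchPair?_append, switchPair?_swap hxy]
  split_ifs with hB
  · rfl
  · have hne : s(x, y) ≠ s(a, b) := by
      intro h
      apply hB
      constructor
      · rcases Sym2.mem_iff.mp (h ▸ Sym2.mem_mk_left x y) with rfl | rfl <;> assumption
      · rcases Sym2.mem_iff.mp (h ▸ Sym2.mem_mk_right x y) with rfl | rfl <;> assumption
    simp [hne]

lemma switchSeq_cons_cons (R T : List α) (P : List (List α)) :
    switchSeq (R :: T :: P) = (switchPair? R T).toList ++ switchSeq (T :: P) := by
  cases h : switchPair? R T <;> simp [switchSeq, h]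

lemma switchSeq_destutter' (P : List (List α)) (R : List α) :
    switchSeq (P.destutter' (· ≠ ·) R) = switchSeq (R :: P) := by
  induction P generalizing R with
  | nil => rfl
  | cons T P ih =>
    by_cases hRT : R = T
    · subst hRT
      rw [List.destutter'_cons_neg _ (not_not.mpr rfl), ih, switchSeq_cons_cons,
        switchPair?_self, Option.toList_none, List.nil_append]
    · obtain ⟨Q, hQ⟩ := List.exists_destutter'_eq_cons (· ≠ ·) P T
      rw [List.destutter'_cons_pos _ hRT, hQ, switchSeq_cons_cons, ← hQ, ih,
        switchSeq_cons_cons]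

lemma switchSeq_destutter (P : List (List α)) :
    switchSeq (P.destutter (· ≠ ·)) = switchSeq P := by
  cases P with
  | nil => rfl
  | cons R P => exact switchSeq_destutter' P R

lemma count_switchSeq_map_restrictOrd {B : Finset α} {a b : α} (haB : a ∈ B) (hbB : b ∈ B)
    {P : List (List α)} (hP : P.IsChain Alike) :
    (switchSeq (P.map (restrictOrd · B))).count s(a, b) = (switchSeq P).count s(a, b) := by
  induction P with
  | nil => rfl
  | cons R P ih =>
    cases P with
    | nil => rfl
    | cons T P =>
      rw [List.isChain_cons_cons] at hP
      rw [List.map_cons, List.map_cons, switchSeq_cons_cons, switchSeq_cons_cons,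
        List.count_append, List.count_append, count_switchPair?_restrictOrd_of_alike haB hbB hP.1,
        ← ih hP.2, List.map_cons]

end Switching

theorem count_switchPair_restrict_general [DecidableEq α] (A : Finset α)
    (P : List (List α)) (hP : IsPathOn A P) (a b c : α) :
    (switchSeq P).count s(a, b) =
      (switchSeq (restrictPath P {a, b, c})).count s(a, b) := by
  rw [restrictPath, switchSeq_destutter]
  exact (count_switchSeq_map_restrictOrd (by simp) (by simp) hP.2.2).symm

/-- For a path `𝒜` of alike linear orders on `L(A)` and distinct
`a,b,c ∈ A`, the number of occurrences of the switching pair `(a,b)` in `S(𝒜)`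
equals its number of occurrences in `S(𝒜_{{a,b,c}})`. -/
theorem count_switchPair_restrict [DecidableEq α] (A : Finset α)
    (P : List (List α)) (hP : IsPathOn A P) (a b c : α)
    (ha : a ∈ A) (hb : b ∈ A) (hc : c ∈ A)
    (hab : a ≠ b) (hac : a ≠ c) (hbc : b ≠ c) :
    (switchSeq P).count s(a, b) =
      (switchSeq (restrictPath P {a, b, c})).count s(a, b) :=
  count_switchPair_restrict_general A P hP a b c
end

section
/- Let D ⊆ L(A) be a peak-pit Condorcet domain. Then for all distinct a, b, c ∈ A and all R, T ∈ D_{{a,b,c}}, there is a geodesic 𝒜 on L({a,b,c}) connecting R and T such that D_{{a,b,c}} ∪ K(𝒜) is a peak-pit Condorcet domain. -/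
/-!
Common definitions for formalizing Condorcet domains.

A linear order on a finite set `A : Finset α` of alternatives is encoded as a
duplicate-free list enumerating the elements of `A` from most preferred (head)
to least preferred (last).
-/

variable {α : Type*}

/-!
On a triple `{x, y, z}` the six linear orders form a hexagon of alike orders. A never-top or
never-bottom condition on `y` deletes two adjacent vertices, so the four remaining orders form a
path from `[x, y, z]` to `[z, y, x]` along which the number of inversions relative to `[x, y, z]`
grows by one at each step. Alike orders differ by at most one inversion, so every segment of this
path is a geodesic, and adding it to the domain preserves the never-condition on `y`.
-/

theorem Alike.symm {R T : List α} (h : Alike R T) : Alike T R := by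
  obtain ⟨l₁, l₂, x, y, hxy, rfl, rfl⟩ := h
  exact ⟨l₁, l₂, y, x, hxy.symm, rfl, rfl⟩

section Paths

variable [DecidableEq α] {A : Finset α}

theorem IsPath.reverse {P : List (List α)} {R T : List α} (hP : IsPath A P R T) :
    IsPath A P.reverse T R := by
  obtain ⟨⟨hne, hlin, hchain⟩, hR, hT⟩ := hP
  refine ⟨⟨by simpa using hne, by simpa using hlin, ?_⟩, by simpa using hT, by simpa using hR⟩
  exact List.isChain_reverse.mpr (hchain.imp fun _ _ h => h.symm)

theorem IsGeodesic.reverse {P : List (List α)} {R T : List α} (hP : IsGeodesic A P R T) :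
    IsGeodesic A P.reverse T R :=
  ⟨hP.1.reverse, fun Q hQ => by simpa using hP.2 Q.reverse hQ.reverse⟩

theorem IsPath.apply_lt_apply_add_length {f : List α → ℕ}
    (hf : ∀ X Y, IsLinOrd A X → Alike X Y → f Y ≤ f X + 1) :
    ∀ {P : List (List α)} {R T : List α}, IsPath A P R T → f T < f R + P.length
  | [], _, _, ⟨⟨hne, _⟩, _⟩ => absurd rfl hne
  | [X], R, T, ⟨_, hR, hT⟩ => by
    obtain rfl : X = R := by simpa using hR
    obtain rfl : X = T := by simpa using hT
    simp
  | X :: Y :: P, R, T, ⟨⟨_, hlin, hchain⟩, hR, hT⟩ => by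
    obtain rfl : X = R := by simpa using hR
    rw [List.Chain', List.isChain_cons_cons] at hchain
    have hYT : IsPath A (Y :: P) Y T :=
      ⟨⟨List.cons_ne_nil _ _, fun l hl => hlin l (List.mem_cons_of_mem _ hl), hchain.2⟩,
        rfl, by simpa using hT⟩
    have := IsPath.apply_lt_apply_add_length hf hYT
    have := hf X Y (hlin X List.mem_cons_self) hchain.1
    simp only [List.length_cons] at *
    omega

theorem IsPath.isGeodesic_of_length_add {f : List α → ℕ}
    (hf : ∀ X Y, IsLinOrd A X → Alike X Y → f Y ≤ f X + 1)
    {P : List (List α)} {R T : List α} (hP : IsPath A P R T)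
    (hlen : P.length + f R = f T + 1) : IsGeodesic A P R T :=
  ⟨hP, fun Q hQ => by have := hQ.apply_lt_apply_add_length hf; omega⟩

end Paths

section Chains

variable [DecidableEq α] {A : Finset α} {f : List α → ℕ}

def IsAscendingPath (A : Finset α) (f : List α → ℕ) (C : List (List α)) : Prop :=
  (∀ l ∈ C, IsLinOrd A l) ∧ C.IsChain fun X Y => Alike X Y ∧ f Y = f X + 1

theorem IsAscendingPath.of_cons {X : List α} {C : List (List α)}
    (hC : IsAscendingPath A f (X :: C)) : IsAscendingPath A f C :=
  ⟨fun l hl => hC.1 l (List.mem_cons_of_mem _ hl), hC.2.of_cons⟩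

theorem IsAscendingPath.exists_isPath_of_mem {X T : List α} :
    ∀ {C : List (List α)}, IsAscendingPath A f (X :: C) → T ∈ X :: C →
      ∃ P, IsPath A P X T ∧ (∀ l ∈ P, l ∈ X :: C) ∧ P.length + f X = f T + 1
  | C, hC, hT => by
    rcases List.mem_cons.mp hT with rfl | hT
    · exact ⟨[T], ⟨⟨by simp, by simpa using hC.1 T List.mem_cons_self, List.isChain_singleton _⟩,
        rfl, rfl⟩, by simp, Nat.add_comm _ _⟩
    obtain ⟨Y, C, rfl⟩ := List.exists_cons_of_ne_nil (List.ne_nil_of_mem hT)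
    have hXY := (List.isChain_cons_cons.mp hC.2).1
    obtain ⟨P, ⟨⟨hne, hlin, hchain⟩, hY, hPT⟩, hPC, hlen⟩ := hC.of_cons.exists_isPath_of_mem hT
    rcases P with _ | ⟨Z, P⟩
    · exact absurd rfl hne
    obtain rfl : Y = Z := (Option.some.inj hY).symm
    refine ⟨X :: Y :: P, ⟨⟨by simp, ?_, ?_⟩, rfl, by simpa using hPT⟩, ?_, ?_⟩
    · exact List.forall_mem_cons.mpr ⟨hC.1 X List.mem_cons_self, hlin⟩
    · exact List.isChain_cons_cons.mpr ⟨hXY.1, hchain⟩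
    · exact List.forall_mem_cons.mpr
        ⟨List.mem_cons_self, fun l hl => List.mem_cons_of_mem _ (hPC l hl)⟩
    · simp only [List.length_cons] at hlen ⊢
      omega

theorem IsAscendingPath.exists_isGeodesic
    (hf : ∀ X Y, IsLinOrd A X → Alike X Y → f Y ≤ f X + 1) :
    ∀ {C : List (List α)}, IsAscendingPath A f C → ∀ {R T : List α}, R ∈ C → T ∈ C →
      ∃ P, IsGeodesic A P R T ∧ ∀ l ∈ P, l ∈ C
  | [], _, _, _, hR, _ => absurd hR List.not_mem_nil
  | X :: C, hC, R, T, hR, hT => by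
    rcases List.mem_cons.mp hR with rfl | hRC
    · obtain ⟨P, hP, hPC, hlen⟩ := hC.exists_isPath_of_mem hT
      exact ⟨P, hP.isGeodesic_of_length_add hf hlen, hPC⟩
    rcases List.mem_cons.mp hT with rfl | hTC
    · obtain ⟨P, hP, hPC, hlen⟩ := hC.exists_isPath_of_mem (List.mem_cons_of_mem _ hRC)
      exact ⟨P.reverse, (hP.isGeodesic_of_length_add hf hlen).reverse, by simpa using hPC⟩
    obtain ⟨P, hP, hPC⟩ := hC.of_cons.exists_isGeodesic hf hRC hTC
    exact ⟨P, hP, fun l hl => List.mem_cons_of_mem _ (hPC l hl)⟩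

end Chains

section Triple

variable [DecidableEq α] {x y z : α}

theorem alike_three_iff {p q r : α} {M : List α} :
    Alike [p, q, r] M ↔ (p ≠ q ∧ M = [q, p, r]) ∨ (q ≠ r ∧ M = [p, r, q]) := by
  constructor
  · rintro ⟨l₁, l₂, s, t, hst, h1, rfl⟩
    match l₁, h1 with
    | [], h1 =>
      obtain ⟨rfl, rfl, rfl⟩ : p = s ∧ q = t ∧ [r] = l₂ := by simpa using h1
      exact .inl ⟨hst, rfl⟩
    | [e], h1 =>
      obtain ⟨rfl, rfl, rfl, rfl⟩ : p = e ∧ q = s ∧ r = t ∧ [] = l₂ := by simpa using h1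
      exact .inr ⟨hst, rfl⟩
    | _ :: _ :: _, h1 =>
      have := congrArg List.length h1
      simp at this
      omega
  · rintro (⟨h, rfl⟩ | ⟨h, rfl⟩)
    exacts [⟨[], [r], p, q, h, rfl, rfl⟩, ⟨[p], [], q, r, h, rfl, rfl⟩]

theorem IsLinOrd.eq_of_triple (hxy : x ≠ y) (hxz : x ≠ z) (hyz : y ≠ z) {l : List α}
    (hl : IsLinOrd {x, y, z} l) :
    l = [x, y, z] ∨ l = [x, z, y] ∨ l = [y, x, z] ∨
      l = [y, z, x] ∨ l = [z, x, y] ∨ l = [z, y, x] := by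
  have hperm : l.Perm [x, y, z] := by
    refine (List.perm_ext_iff_of_nodup hl.1 (by simp [hxy, hxz, hyz])).2 fun t => ?_
    rw [← List.mem_toFinset, hl.2]
    simp
  have := List.mem_permutations.2 hperm
  simp [List.permutations, List.permutationsAux, List.permutationsAux.rec] at this
  tauto

def inversions : List α → List α → ℕ
  | [], _ => 0
  | x :: r, l => r.countP (fun y => l.idxOf y < l.idxOf x) + inversions r l

theorem inversions_le_of_alike (hxy : x ≠ y) (hxz : x ≠ z) (hyz : y ≠ z) {X Y : List α}
    (hX : IsLinOrd {x, y, z} X) (h : Alike X Y) :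
    inversions [x, y, z] Y ≤ inversions [x, y, z] X + 1 := by
  have := hxy.symm; have := hxz.symm; have := hyz.symm
  rcases hX.eq_of_triple hxy hxz hyz with rfl | rfl | rfl | rfl | rfl | rfl <;>
    rcases alike_three_iff.1 h with ⟨-, rfl⟩ | ⟨-, rfl⟩ <;>
    simp [inversions, List.idxOf_cons, Bool.cond_eq_ite, *]

theorem exists_ascendingPath_neverCond (hxy : x ≠ y) (hxz : x ≠ z) (hyz : y ≠ z) {k : Fin 3}
    (hk : k = 0 ∨ k = 2) :
    ∃ C, IsAscendingPath {x, y, z} (inversions [x, y, z]) C ∧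
      ∀ l, IsLinOrd {x, y, z} l → (l ∈ C ↔ l[(k : ℕ)]? ≠ some y) := by
  have := hxy.symm; have := hxz.symm; have := hyz.symm
  refine ⟨if k = 0 then [[x, y, z], [x, z, y], [z, x, y], [z, y, x]]
    else [[x, y, z], [y, x, z], [y, z, x], [z, y, x]], ⟨?_, ?_⟩, fun l hl => ?_⟩
  · rcases hk with rfl | rfl <;>
      simp only [Fin.reduceEq, ↓reduceIte, List.mem_cons, List.not_mem_nil, or_false] <;>
      rintro l (rfl | rfl | rfl | rfl) <;> exact ⟨by simp [*], by ext; simp [or_comm, or_left_comm]⟩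
  · rcases hk with rfl | rfl <;>
      simp [alike_three_iff, inversions, List.idxOf_cons, Bool.cond_eq_ite, *]
  · rcases hk with rfl | rfl <;>
      rcases hl.eq_of_triple hxy hxz hyz with rfl | rfl | rfl | rfl | rfl | rfl <;> simp [*]

theorem exists_isGeodesic_union_neverCond (hxy : x ≠ y) (hxz : x ≠ z) (hyz : y ≠ z)
    {E : Set (List α)} (hE : ∀ l ∈ E, IsLinOrd {x, y, z} l) {k : Fin 3}
    (hk : k = 0 ∨ k = 2) (hEk : NeverCond E y k) {R T : List α} (hR : R ∈ E) (hT : T ∈ E) :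
    ∃ P, IsGeodesic {x, y, z} P R T ∧ NeverCond (E ∪ {l | l ∈ P}) y k := by
  obtain ⟨C, hC, hCk⟩ := exists_ascendingPath_neverCond hxy hxz hyz hk
  have hEC : ∀ l ∈ E, l ∈ C := fun l hl => (hCk l (hE l hl)).2 (hEk l hl)
  obtain ⟨P, hP, hPC⟩ := hC.exists_isGeodesic (fun _ _ => inversions_le_of_alike hxy hxz hyz)
    (hEC R hR) (hEC T hT)
  refine ⟨P, hP, ?_⟩
  rintro l (hl | hl)
  exacts [hEk l hl, (hCk l (hC.1 l (hPC l hl))).1 (hPC l hl)]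

end Triple

section Domains

variable [DecidableEq α]

theorem IsLinOrd.restrictOrd {A S : Finset α} {l : List α} (hl : IsLinOrd A l) (hS : S ⊆ A) :
    IsLinOrd S (restrictOrd l S) := by
  refine ⟨hl.1.filter _, Finset.ext fun t => ?_⟩
  simp only [_root_.restrictOrd, List.mem_toFinset, List.mem_filter, decide_eq_true_eq,
    and_iff_right_iff_imp]
  intro ht
  rw [← List.mem_toFinset, hl.2]
  exact hS ht

theorem restrictDom_eq_self {S : Finset α} {E : Set (List α)} (hE : ∀ l ∈ E, IsLinOrd S l) :
    restrictDom E S = E := by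
  have hfix : ∀ l ∈ E, restrictOrd l S = l := fun l hl =>
    List.filter_eq_self.mpr fun t ht => by simpa [← (hE l hl).2] using ht
  ext l
  exact ⟨fun ⟨m, hm, hml⟩ => (hfix m hm).symm.trans hml ▸ hm, fun hl => ⟨l, hl, hfix l hl⟩⟩

theorem isPeakPitDomain_triple {x y z u : α} (hxy : x ≠ y) (hxz : x ≠ z) (hyz : y ≠ z)
    {E : Set (List α)} (hE : ∀ l ∈ E, IsLinOrd {x, y, z} l) (hu : u ∈ ({x, y, z} : Finset α))
    {k : Fin 3} (hk : k = 0 ∨ k = 2) (hEk : NeverCond E u k) :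
    IsPeakPitDomain {x, y, z} E := by
  refine ⟨hE, fun a b c ha hb hc hab hac hbc => ⟨u, ?_⟩⟩
  have habc : ({a, b, c} : Finset α) = {x, y, z} :=
    Finset.eq_of_subset_of_card_le (by simp [Finset.insert_subset_iff, ha, hb, hc]) <| by
      rw [Finset.card_eq_three.mpr ⟨x, y, z, hxy, hxz, hyz, rfl⟩,
        Finset.card_eq_three.mpr ⟨a, b, c, hab, hac, hbc, rfl⟩]
  rw [habc, restrictDom_eq_self hE]
  rcases hk with rfl | rfl
  exacts [⟨hu, .inl hEk⟩, ⟨hu, .inr hEk⟩]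

theorem exists_eq_triple_of_mem {a b c x : α} (hx : x ∈ ({a, b, c} : Finset α))
    (hab : a ≠ b) (hac : a ≠ c) (hbc : b ≠ c) :
    ∃ y z, y ≠ x ∧ y ≠ z ∧ x ≠ z ∧ ({a, b, c} : Finset α) = {y, x, z} := by
  simp only [Finset.mem_insert, Finset.mem_singleton] at hx
  rcases hx with rfl | rfl | rfl
  · exact ⟨b, c, hab.symm, hbc, hac, Finset.insert_comm _ _ _⟩
  · exact ⟨a, c, hab, hac, hbc, rfl⟩
  · exact ⟨a, b, hac, hab, hbc.symm, by rw [Finset.pair_comm]⟩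

end Domains

/-- Let `D ⊆ L(A)` be a peak-pit Condorcet domain.  For all
distinct `a,b,c ∈ A` and all `R, T ∈ D_{{a,b,c}}`, there is a geodesic `𝒜` on
`L({a,b,c})` connecting `R` and `T` such that `D_{{a,b,c}} ∪ K(𝒜)` is a
peak-pit Condorcet domain. -/
theorem exists_geodesic_triple [DecidableEq α] (A : Finset α)
    (D : Set (List α)) (hD : IsPeakPitDomain A D) (a b c : α)
    (ha : a ∈ A) (hb : b ∈ A) (hc : c ∈ A)
    (hab : a ≠ b) (hac : a ≠ c) (hbc : b ≠ c)
    (R T : List α) (hR : R ∈ restrictDom D {a, b, c})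
    (hT : T ∈ restrictDom D {a, b, c}) :
    ∃ P : List (List α), IsGeodesic {a, b, c} P R T ∧
      IsPeakPitDomain {a, b, c} (restrictDom D {a, b, c} ∪ {l | l ∈ P}) := by
  have hsub : ({a, b, c} : Finset α) ⊆ A := by simp [Finset.insert_subset_iff, ha, hb, hc]
  have hE : ∀ l ∈ restrictDom D {a, b, c}, IsLinOrd {a, b, c} l := by
    rintro _ ⟨l, hl, rfl⟩
    exact (hD.1 l hl).restrictOrd hsub
  obtain ⟨x, hx, hcond⟩ := hD.2 a b c ha hb hc hab hac hbc
  obtain ⟨k, hk, hxk⟩ : ∃ k : Fin 3, (k = 0 ∨ k = 2) ∧ NeverCond (restrictDom D {a, b, c}) x k :=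
    hcond.elim (⟨0, .inl rfl, ·⟩) (⟨2, .inr rfl, ·⟩)
  obtain ⟨y, z, hyx, hyz, hxz, hS⟩ := exists_eq_triple_of_mem hx hab hac hbc
  rw [hS] at hE hxk hR hT ⊢
  obtain ⟨P, hP, hPk⟩ := exists_isGeodesic_union_neverCond hyx hyz hxz hE hk hxk hR hT
  refine ⟨P, hP, isPeakPitDomain_triple hyx hyz hxz ?_ (by simp) hk hPk⟩
  rintro l (hl | hl)
  exacts [hE l hl, hP.1.1.2.1 l hl]
end
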